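/- arXiv:2106.02391 — 6 statements merged into one kernel-verified Lean document; each statement's English description precedes it below -/
import Mathlib

section
/- For real matrices A ∈ ℝ^{n×n}, B ∈ ℝ^{n×m}, and F ∈ ℝ^{m×n}, the spectral radius of A + B·F equals the spectral radius of the block matrix A_F := [[A, B], [F·A, F·B]] ∈ ℝ^{(n+m)×(n+m)}. -/
open Matrix

/-- The spectral radius of a real square matrix: the supremum of the moduli of the
elements of the spectrum of the matrix regarded as a complex matrix. -/
noncomputable def specRad {N : Type*} [Fintype N] [DecidableEq N] (M : Matrix N N ℝ) : ℝ :=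
  sSup ((fun z : ℂ => ‖z‖) '' spectrum ℂ (M.map Complex.ofReal))

/-!
With `P = [1; F]` and `Q = [A B]` we have `A + B F = Q P` and `A_F = P Q`. By Sylvester's
identity `X^n χ_{PQ} = X^(n+m) χ_{QP}` the two products have the same nonzero eigenvalues, and
the eigenvalue `0` cannot change a supremum of moduli, as moduli are nonnegative and `sSup ∅ = 0`.
-/

theorem Matrix.spectrum_mul_comm_sdiff_zero {K k l : Type*} [Field K] [Fintype k] [Fintype l]
    [DecidableEq k] [DecidableEq l] (M : Matrix k l K) (N : Matrix l k K) :
    spectrum K (M * N) \ {0} = spectrum K (N * M) \ {0} := by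
  ext z
  simp only [Set.mem_sdiff, Set.mem_singleton_iff, mem_spectrum_iff_isRoot_charpoly,
    Polynomial.IsRoot.def, and_congr_left_iff]
  intro hz
  have h := congrArg (Polynomial.eval z) (charpoly_mul_comm' M N)
  simp only [Polynomial.eval_mul, Polynomial.eval_pow, Polynomial.eval_X] at h
  rw [← mul_right_inj' (pow_ne_zero (Fintype.card l) hz), h, mul_zero,
    mul_eq_zero_iff_left (pow_ne_zero _ hz)]

theorem sSup_norm_image_le_of_sdiff_zero_subset {E : Type*} [NormedAddCommGroup E] {S T : Set E}
    (hST : S \ {0} ⊆ T) (hT : BddAbove ((fun z : E => ‖z‖) '' T)) :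
    sSup ((fun z : E => ‖z‖) '' S) ≤ sSup ((fun z : E => ‖z‖) '' T) := by
  have hnonneg : 0 ≤ sSup ((fun z : E => ‖z‖) '' T) :=
    Real.sSup_nonneg (by rintro _ ⟨z, -, rfl⟩; exact norm_nonneg z)
  refine Real.sSup_le ?_ hnonneg
  rintro _ ⟨z, hz, rfl⟩
  by_cases hz0 : z = 0
  · simpa [hz0] using hnonneg
  · exact le_csSup hT ⟨z, hST ⟨hz, hz0⟩, rfl⟩

theorem specRad_mul_comm {k l : Type*} [Fintype k] [Fintype l] [DecidableEq k] [DecidableEq l]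
    (M : Matrix k l ℝ) (N : Matrix l k ℝ) : specRad (M * N) = specRad (N * M) := by
  have hspec := spectrum_mul_comm_sdiff_zero (M.map Complex.ofReal) (N.map Complex.ofReal)
  have hMN : (M * N).map Complex.ofReal = M.map Complex.ofReal * N.map Complex.ofReal :=
    Matrix.map_mul (f := Complex.ofRealHom)
  have hNM : (N * M).map Complex.ofReal = N.map Complex.ofReal * M.map Complex.ofReal :=
    Matrix.map_mul (f := Complex.ofRealHom)
  rw [specRad, specRad, hMN, hNM]
  exact le_antisymm
    (sSup_norm_image_le_of_sdiff_zero_subset (hspec ▸ Set.sdiff_subset)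
      ((finite_spectrum _).image _).bddAbove)
    (sSup_norm_image_le_of_sdiff_zero_subset (hspec.symm ▸ Set.sdiff_subset)
      ((finite_spectrum _).image _).bddAbove)

/-- The spectral radius of `A + B·F` equals that of the block matrix
`A_F = [[A, B], [F·A, F·B]]`. -/
theorem spectral_radius_eq_of_augmented {n m : ℕ}
    (A : Matrix (Fin n) (Fin n) ℝ) (B : Matrix (Fin n) (Fin m) ℝ)
    (F : Matrix (Fin m) (Fin n) ℝ) :
    specRad (A + B * F) = specRad (Matrix.fromBlocks A B (F * A) (F * B)) := by
  have hclosed : A + B * F = fromCols A B * fromRows (1 : Matrix (Fin n) (Fin n) ℝ) F := by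
    rw [fromCols_mul_fromRows, Matrix.mul_one]
  have haug : fromBlocks A B (F * A) (F * B) =
      fromRows (1 : Matrix (Fin n) (Fin n) ℝ) F * fromCols A B := by
    rw [fromRows_mul_fromCols, Matrix.one_mul, Matrix.one_mul]
  rw [hclosed, haug, specRad_mul_comm]
end

section
/- Let Q ∈ ℝ^{n×n} be symmetric and R ∈ ℝ^{m×n} with rank(R) < n. Then the following are equivalent: (1) xᵀ·Q·x < 0 for every nonzero x ∈ ℝ^n with R·x = 0; (2) there exists M ∈ ℝ^{n×m} such that Q + M·R + Rᵀ·Mᵀ is negative definite. -/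
/-! With `M = -(k/2) Rᵀ` the form of `Q + M R + Rᵀ Mᵀ` is `xᵀQx - k ‖Rx‖²`. On the compact unit
sphere, `‖Rx‖²` is bounded below by a positive constant wherever `xᵀQx ≥ 0` (such `x` lie off
`ker R`), so this form is negative on the sphere for large `k`, hence negative definite by
homogeneity. Conversely, the correction term vanishes on `ker R`. -/

open Matrix

theorem IsCompact.exists_forall_lt_mul {X : Type*} [TopologicalSpace X] {s : Set X}
    (hs : IsCompact s) {f g : X → ℝ} (hf : Continuous f) (hg : Continuous g)
    (hg_nonneg : ∀ x ∈ s, 0 ≤ g x) (hf_neg : ∀ x ∈ s, g x = 0 → f x < 0) :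
    ∃ k : ℝ, ∀ x ∈ s, f x < k * g x := by
  set K := s ∩ {x | 0 ≤ f x}
  have hK : IsCompact K := hs.inter_right (isClosed_le continuous_const hf)
  have hg_pos : ∀ x ∈ K, 0 < g x := fun x hx =>
    (hg_nonneg x hx.1).lt_of_ne' fun h => (hf_neg x hx.1 h).not_ge hx.2
  obtain ⟨C, hC⟩ :=
    hK.bddAbove_image (hf.continuousOn.div hg.continuousOn fun x hx => (hg_pos x hx).ne')
  refine ⟨max C 0 + 1, fun x hx => ?_⟩
  by_cases hfx : 0 ≤ f x
  · have hxK : x ∈ K := ⟨hx, hfx⟩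
    have hle : f x ≤ C * g x := (div_le_iff₀ (hg_pos x hxK)).1 (hC ⟨x, hxK, rfl⟩)
    nlinarith [le_max_left C 0, hg_pos x hxK]
  · nlinarith [hg_nonneg x hx, le_max_right C 0]

namespace Matrix

variable {ι κ α : Type*} [Fintype κ] [CommRing α]

theorem IsSymm.add_mul_add_transpose_mul {Q : Matrix ι ι α} (hQ : Q.IsSymm)
    (M : Matrix ι κ α) (R : Matrix κ ι α) : (Q + M * R + Rᵀ * Mᵀ).IsSymm := by
  simp only [IsSymm, transpose_add, transpose_mul, transpose_transpose, hQ.eq]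
  abel

variable [Fintype ι]

theorem dotProduct_mulVec_mul_add_transpose_mul (M : Matrix ι κ α) (R : Matrix κ ι α)
    (x : ι → α) : x ⬝ᵥ (M * R + Rᵀ * Mᵀ) *ᵥ x = 2 * (x ⬝ᵥ M *ᵥ (R *ᵥ x)) := by
  rw [add_mulVec, dotProduct_add, ← mulVec_mulVec, ← mulVec_mulVec, dotProduct_mulVec x Rᵀ,
    vecMul_transpose, dotProduct_mulVec (R *ᵥ x) Mᵀ, vecMul_transpose, dotProduct_comm]
  ring

theorem posDef_of_pos_on_sphere {A : Matrix ι ι ℝ} (hA : A.IsSymm)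
    (h : ∀ x ∈ Metric.sphere (0 : ι → ℝ) 1, 0 < x ⬝ᵥ A *ᵥ x) : A.PosDef := by
  refine posDef_iff_dotProduct_mulVec.2 ⟨isHermitian_iff_isSymm.2 hA, fun x hx => ?_⟩
  have hx_norm : 0 < ‖x‖ := norm_pos_iff.2 hx
  have hpos := h (‖x‖⁻¹ • x) (by simp [norm_smul, hx_norm.ne'])
  rw [mulVec_smul, smul_dotProduct, dotProduct_smul, smul_eq_mul, smul_eq_mul,
    ← mul_assoc] at hpos
  simpa using pos_of_mul_pos_right hpos (by positivity)

end Matrix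

theorem finsler_lemma_general {n m : ℕ}
    (Q : Matrix (Fin n) (Fin n) ℝ) (hQ : Q.IsSymm)
    (R : Matrix (Fin m) (Fin n) ℝ) :
    (∀ x : Fin n → ℝ, x ≠ 0 → R.mulVec x = 0 → x ⬝ᵥ Q.mulVec x < 0) ↔
      ∃ M : Matrix (Fin n) (Fin m) ℝ, (-(Q + M * R + Rᵀ * Mᵀ)).PosDef := by
  constructor
  · intro h
    obtain ⟨k, hk⟩ := (isCompact_sphere (0 : Fin n → ℝ) 1).exists_forall_lt_mul
      (f := fun x => x ⬝ᵥ Q *ᵥ x) (g := fun x => (R *ᵥ x) ⬝ᵥ (R *ᵥ x)) (by fun_prop)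
      (by fun_prop) (fun x _ => dotProduct_self_star_nonneg _)
      (fun x hx hRx => h x (ne_zero_of_mem_unit_sphere ⟨x, hx⟩) (dotProduct_self_eq_zero.1 hRx))
    refine ⟨-(k / 2) • Rᵀ, posDef_of_pos_on_sphere (hQ.add_mul_add_transpose_mul _ _).neg
      fun x hx => ?_⟩
    have hlt := hk x hx
    rw [neg_mulVec, dotProduct_neg, add_assoc, add_mulVec, dotProduct_add,
      dotProduct_mulVec_mul_add_transpose_mul, smul_mulVec, dotProduct_smul,
      dotProduct_mulVec x Rᵀ, vecMul_transpose, smul_eq_mul]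
    linarith
  · rintro ⟨M, hM⟩ x hx hRx
    have hpos := (posDef_iff_dotProduct_mulVec.1 hM).2 hx
    rw [star_trivial, neg_mulVec, dotProduct_neg, add_assoc, add_mulVec, dotProduct_add,
      dotProduct_mulVec_mul_add_transpose_mul, hRx, mulVec_zero, dotProduct_zero] at hpos
    linarith

/-- Finsler's lemma: for symmetric `Q` and `R` with `rank R < n`, the quadratic form
`xᵀQx` is negative on the nonzero kernel of `R` iff there is `M` such that
`Q + M·R + Rᵀ·Mᵀ` is negative definite. -/
theorem finsler_lemma {n m : ℕ}
    (Q : Matrix (Fin n) (Fin n) ℝ) (hQ : Q.IsSymm)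
    (R : Matrix (Fin m) (Fin n) ℝ) (hR : R.rank < n) :
    (∀ x : Fin n → ℝ, x ≠ 0 → R.mulVec x = 0 → x ⬝ᵥ Q.mulVec x < 0) ↔
      ∃ M : Matrix (Fin n) (Fin m) ℝ, (-(Q + M * R + Rᵀ * Mᵀ)).PosDef :=
  finsler_lemma_general Q hQ R
end

section
/- Let A ∈ ℝ^{n×n}, B ∈ ℝ^{n×m}, F ∈ ℝ^{m×n}, and A_F := [[A, B], [F·A, F·B]]. For i = 1,…,r let x(·;i) : ℕ → ℝ^n and u(·;i) : ℕ → ℝ^m satisfy u(k;i) = F·x(k;i) and x(k+1;i) = A·x(k;i) + B·u(k;i) for all k ∈ ℕ. Set v(k;i) := (x(k;i), u(k;i)) ∈ ℝ^{n+m}, S := (1/(r·N))·Σ_{i=1}^{r} Σ_{k=0}^{N−1} v(k;i)·v(k;i)ᵀ, and H := (1/(r·N))·Σ_{i=1}^{r} Σ_{k=0}^{N−1} v(k;i)·v(k+1;i)ᵀ. Then S·A_Fᵀ = H. -/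
open Matrix

theorem fromBlocks_mul_mulVec_sum_elim {l m α : Type*} [Fintype l] [Fintype m]
    [NonUnitalSemiring α] (A : Matrix l l α) (B : Matrix l m α) (F : Matrix m l α)
    (x : l → α) (u : m → α) :
    fromBlocks A B (F * A) (F * B) *ᵥ Sum.elim x u =
      Sum.elim (A *ᵥ x + B *ᵥ u) (F *ᵥ (A *ᵥ x + B *ᵥ u)) := by
  rw [fromBlocks_mulVec, Sum.elim_comp_inl, Sum.elim_comp_inr, mulVec_add, mulVec_mulVec,
    mulVec_mulVec]

theorem data_matrix_transformation_on_policy_general {n m : ℕ} (r N : ℕ)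
    (A : Matrix (Fin n) (Fin n) ℝ) (B : Matrix (Fin n) (Fin m) ℝ)
    (F : Matrix (Fin m) (Fin n) ℝ)
    (x : Fin r → ℕ → Fin n → ℝ) (u : Fin r → ℕ → Fin m → ℝ)
    (hu : ∀ i k, u i k = F.mulVec (x i k))
    (hx : ∀ i k, x i (k + 1) = A.mulVec (x i k) + B.mulVec (u i k)) :
    ((1 / ((r : ℝ) * (N : ℝ))) • ∑ i : Fin r, ∑ k ∈ Finset.range N,
        Matrix.vecMulVec (Sum.elim (x i k) (u i k)) (Sum.elim (x i k) (u i k))) *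
      (Matrix.fromBlocks A B (F * A) (F * B))ᵀ =
    (1 / ((r : ℝ) * (N : ℝ))) • ∑ i : Fin r, ∑ k ∈ Finset.range N,
        Matrix.vecMulVec (Sum.elim (x i k) (u i k))
          (Sum.elim (x i (k + 1)) (u i (k + 1))) := by
  have step : ∀ i k, fromBlocks A B (F * A) (F * B) *ᵥ Sum.elim (x i k) (u i k) =
      Sum.elim (x i (k + 1)) (u i (k + 1)) := fun i k => by
    rw [fromBlocks_mul_mulVec_sum_elim, ← hx, hu]
  simp only [Matrix.smul_mul, Finset.sum_mul, vecMulVec_mul, vecMul_transpose, step]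

/-- On-policy data matrix transformation: `S(F) · A_Fᵀ = H(F)`. -/
theorem data_matrix_transformation_on_policy {n m : ℕ} (r N : ℕ) (hr : 1 ≤ r) (hN : 1 ≤ N)
    (A : Matrix (Fin n) (Fin n) ℝ) (B : Matrix (Fin n) (Fin m) ℝ)
    (F : Matrix (Fin m) (Fin n) ℝ)
    (x : Fin r → ℕ → Fin n → ℝ) (u : Fin r → ℕ → Fin m → ℝ)
    (hu : ∀ i k, u i k = F.mulVec (x i k))
    (hx : ∀ i k, x i (k + 1) = A.mulVec (x i k) + B.mulVec (u i k)) :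
    ((1 / ((r : ℝ) * (N : ℝ))) • ∑ i : Fin r, ∑ k ∈ Finset.range N,
        Matrix.vecMulVec (Sum.elim (x i k) (u i k)) (Sum.elim (x i k) (u i k))) *
      (Matrix.fromBlocks A B (F * A) (F * B))ᵀ =
    (1 / ((r : ℝ) * (N : ℝ))) • ∑ i : Fin r, ∑ k ∈ Finset.range N,
        Matrix.vecMulVec (Sum.elim (x i k) (u i k))
          (Sum.elim (x i (k + 1)) (u i (k + 1))) :=
  data_matrix_transformation_on_policy_general r N A B F x u hu hx
end

section
/- Let A ∈ ℝ^{n×n}, B ∈ ℝ^{n×m}, let S ∈ ℝ^{(n+m)×(n+m)} be symmetric positive definite, and set H := S·Tᵀ where T := [A B] ∈ ℝ^{n×(n+m)}. Suppose G ∈ ℝ^{n×n}, symmetric P ∈ ℝ^{(n+m)×(n+m)}, and X ∈ ℝ^{n×m} satisfy that the block matrix [[−S·P·S, [G X]ᵀ], [[G X], Hᵀ·P·H − G − Gᵀ]] is negative definite. Then S·P·S is positive definite, G is invertible, and F := Xᵀ·(Gᵀ)⁻¹ satisfies ρ(A + B·F) < 1 and A_F·(S·P·S)·A_Fᵀ ≺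 S·P·S, where A_F := [[A, B], [F·A, F·B]]. -/
open Matrix

open scoped ComplexOrder

/-! Congruence of the LMI with `[1; Eᵀ]`, where `E = [1; F]` and `[G X] = G Eᵀ`, collapses it to
the Lyapunov inequality `Q - (E T) Q (E T)ᵀ ≻ 0` for `Q = S P S` and `T = [A B]`; `G` is
invertible because `G + Gᵀ ≻ T Q Tᵀ ⪰ 0`. A Lyapunov inequality with `Q ≻ 0` confines the
eigenvalues of `E T` to the open unit disc, and `T E = A + B F` has the same nonzero
eigenvalues. -/

namespace Matrix
variable {k l : Type*}

lemma PosDef.toBlocks₁₁ {R : Type*} [CommRing R] [PartialOrder R] [StarRing R]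
    {M : Matrix (k ⊕ l) (k ⊕ l) R} (h : M.PosDef) : M.toBlocks₁₁.PosDef :=
  h.submatrix Sum.inl_injective

lemma PosDef.toBlocks₂₂ {R : Type*} [CommRing R] [PartialOrder R] [StarRing R]
    {M : Matrix (k ⊕ l) (k ⊕ l) R} (h : M.PosDef) : M.toBlocks₂₂.PosDef :=
  h.submatrix Sum.inr_injective

lemma map_ofReal_mul {o : Type*} [Fintype l] (A : Matrix k l ℝ) (B : Matrix l o ℝ) :
    (A * B).map Complex.ofReal = A.map Complex.ofReal * B.map Complex.ofReal :=
  Matrix.map_mul (f := Complex.ofRealHom)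

lemma fromCols_eq_mul_transpose_fromRows {R : Type*} [CommRing R] [Fintype k] [DecidableEq k]
    {G : Matrix k k R} (hG : IsUnit G) (X : Matrix k l R) :
    fromCols G X = G * (fromRows 1 (Xᵀ * (Gᵀ)⁻¹))ᵀ := by
  rw [transpose_fromRows, transpose_one, mul_fromCols, Matrix.mul_one, transpose_mul,
    transpose_nonsing_inv, transpose_transpose, transpose_transpose, ← Matrix.mul_assoc,
    mul_nonsing_inv _ ((isUnit_iff_isUnit_det G).mp hG), Matrix.one_mul]

variable [Fintype k] [Fintype l]

open scoped MatrixOrder in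
lemma PosDef.map_ofReal [DecidableEq k] {M : Matrix k k ℝ} (hM : M.PosDef) :
    (M.map Complex.ofReal).PosDef := by
  have hdet : (M.map Complex.ofReal).det ≠ 0 := by
    have h : (M.map Complex.ofReal).det = (M.det : ℂ) := (Complex.ofRealHom.map_det M).symm
    rw [h, Complex.ofReal_ne_zero, ← isUnit_iff_ne_zero, ← isUnit_iff_isUnit_det]
    exact hM.isUnit
  obtain ⟨B, rfl⟩ := CStarAlgebra.nonneg_iff_eq_star_mul_self.mp hM.posSemidef.nonneg
  have hmap : (star B * B).map Complex.ofReal =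
      (B.map Complex.ofReal)ᴴ * B.map Complex.ofReal := by
    rw [star_eq_conjTranspose, ← conjTranspose_map _ (fun _ => (Complex.conj_ofReal _).symm)]
    exact map_ofReal_mul _ _
  rw [hmap] at hdet ⊢
  exact (posSemidef_conjTranspose_mul_self _).posDef_iff_det_ne_zero.mpr hdet

lemma exists_mulVec_eq_smul_of_mem_spectrum {K : Type*} [Field K] [DecidableEq k]
    {A : Matrix k k K} {z : K} (h : z ∈ spectrum K A) : ∃ v ≠ 0, A *ᵥ v = z • v := by
  rw [← spectrum_toLin', ← Module.End.hasEigenvalue_iff_mem_spectrum] at h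
  obtain ⟨v, hv, hv0⟩ := h.exists_hasEigenvector
  exact ⟨v, hv0, by simpa using Module.End.mem_eigenspace_iff.mp hv⟩

lemma mem_spectrum_mul_comm_of_ne_zero {K : Type*} [Field K] [DecidableEq k] [DecidableEq l]
    {A : Matrix k l K} {B : Matrix l k K} {z : K} (hz : z ≠ 0)
    (h : z ∈ spectrum K (A * B)) : z ∈ spectrum K (B * A) := by
  rw [mem_spectrum_iff_isRoot_charpoly] at h ⊢
  have := congrArg (Polynomial.eval z) (charpoly_mul_comm' A B)
  simp only [Polynomial.eval_mul, Polynomial.eval_pow, Polynomial.eval_X, h.eq_zero,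
    mul_zero] at this
  exact (mul_eq_zero.mp this.symm).resolve_left (pow_ne_zero _ hz)

lemma norm_lt_one_of_mem_spectrum_of_posDef_sub {𝕜 : Type*} [RCLike 𝕜] [DecidableEq k]
    {N Q : Matrix k k 𝕜} (hQ : Q.PosDef) (hL : (Q - N * Q * Nᴴ).PosDef) {z : 𝕜}
    (hz : z ∈ spectrum 𝕜 N) : ‖z‖ < 1 := by
  have hz' : star z ∈ spectrum 𝕜 Nᴴ := by
    rwa [← star_eq_conjTranspose, spectrum.map_star, Set.mem_star, star_star]
  obtain ⟨v, hv0, hv⟩ := exists_mulVec_eq_smul_of_mem_spectrum hz'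
  have hquad : star v ⬝ᵥ ((Q - N * Q * Nᴴ) *ᵥ v) =
      ((1 - ‖z‖ ^ 2 : ℝ) : 𝕜) * (star v ⬝ᵥ (Q *ᵥ v)) := by
    have hleft : star v ᵥ* N = star (star z • v) := by
      rw [← hv, star_mulVec, conjTranspose_conjTranspose]
    rw [sub_mulVec, dotProduct_sub, ← mulVec_mulVec, ← mulVec_mulVec,
      dotProduct_mulVec (star v) N, hleft, hv, mulVec_smul, star_smul, smul_dotProduct,
      dotProduct_smul, smul_eq_mul, smul_eq_mul, star_star, RCLike.star_def, ← mul_assoc,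
      RCLike.mul_conj]
    push_cast
    ring
  have hq := hQ.dotProduct_mulVec_pos hv0
  have hpos := hL.dotProduct_mulVec_pos hv0
  rw [hquad, RCLike.pos_iff, RCLike.re_ofReal_mul] at hpos
  have hc : 0 < 1 - ‖z‖ ^ 2 := pos_of_mul_pos_left hpos.1 (RCLike.pos_iff.mp hq).1.le
  nlinarith [norm_nonneg z]

lemma isUnit_of_posDef_add_transpose [DecidableEq k] {G : Matrix k k ℝ}
    (h : (G + Gᵀ).PosDef) : IsUnit G := by
  rw [isUnit_iff_isUnit_det, isUnit_iff_ne_zero]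
  intro hdet
  obtain ⟨x, hx0, hx⟩ := exists_mulVec_eq_zero_iff.mpr hdet
  have := h.dotProduct_mulVec_pos hx0
  rw [add_mulVec, mulVec_transpose, dotProduct_add, star_trivial, dotProduct_comm x (x ᵥ* G),
    ← dotProduct_mulVec, hx, dotProduct_zero, add_zero] at this
  exact this.false

lemma posDef_sub_of_posDef_fromBlocks [DecidableEq l] {Q : Matrix l l ℝ} {G W : Matrix k k ℝ}
    {K : Matrix l k ℝ}
    (h : (fromBlocks Q (-(K * Gᵀ)) (-(G * Kᵀ)) (G + Gᵀ - W)).PosDef) :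
    (Q - K * W * Kᵀ).PosDef := by
  have hinj : Function.Injective (fromRows (1 : Matrix l l ℝ) Kᵀ).mulVec := fun v w hvw => by
    simpa [fromRows_mulVec, one_mulVec] using congrArg (· ∘ Sum.inl) hvw
  convert h.conjTranspose_mul_mul_same hinj using 1
  rw [conjTranspose_eq_transpose_of_trivial, transpose_fromRows, transpose_one,
    transpose_transpose, Matrix.mul_assoc (fromCols 1 K), fromBlocks_mul_fromRows,
    fromCols_mul_fromRows]
  simp only [Matrix.mul_one, Matrix.one_mul, Matrix.neg_mul, Matrix.mul_neg,
    Matrix.mul_add, Matrix.add_mul, Matrix.sub_mul, Matrix.mul_sub, Matrix.mul_assoc]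
  abel

end Matrix

section SpectralRadius

variable {k l : Type*} [Fintype k] [Fintype l] [DecidableEq k]

lemma specRad_lt_of_forall_norm_lt {M : Matrix k k ℝ} {r : ℝ} (hr : 0 < r)
    (h : ∀ z ∈ spectrum ℂ (M.map Complex.ofReal), ‖z‖ < r) : specRad M < r := by
  rcases ((fun z : ℂ => ‖z‖) '' spectrum ℂ (M.map Complex.ofReal)).eq_empty_or_nonempty
    with hempty | hne
  · rwa [specRad, hempty, Real.sSup_empty]
  · rw [specRad, ((finite_spectrum _).image _).csSup_lt_iff hne]
    rintro _ ⟨z, hz, rfl⟩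
    exact h z hz

lemma specRad_mul_lt_one_of_posDef_sub [DecidableEq l] {T : Matrix k l ℝ} {E : Matrix l k ℝ}
    {Q : Matrix l l ℝ} (hQ : Q.PosDef) (hL : (Q - E * T * Q * (E * T)ᵀ).PosDef) :
    specRad (T * E) < 1 := by
  refine specRad_lt_of_forall_norm_lt one_pos fun z hz => ?_
  rcases eq_or_ne z 0 with rfl | hz0
  · simp
  have hLc : (Q.map Complex.ofReal - (E * T).map Complex.ofReal * Q.map Complex.ofReal *
      ((E * T).map Complex.ofReal)ᴴ).PosDef := by
    convert hL.map_ofReal using 1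
    rw [← conjTranspose_map _ (fun _ => (Complex.conj_ofReal _).symm),
      conjTranspose_eq_transpose_of_trivial]
    simp only [Matrix.map_sub _ Complex.ofReal_sub, map_ofReal_mul]
  refine norm_lt_one_of_mem_spectrum_of_posDef_sub hQ.map_ofReal hLc ?_
  rw [map_ofReal_mul] at hz ⊢
  exact mem_spectrum_mul_comm_of_ne_zero hz0 hz

end SpectralRadius

theorem stabilization_LMI_gain_general {n m : ℕ}
    (A : Matrix (Fin n) (Fin n) ℝ) (B : Matrix (Fin n) (Fin m) ℝ)
    (S : Matrix (Fin n ⊕ Fin m) (Fin n ⊕ Fin m) ℝ) (hS : S.PosDef)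
    (H : Matrix (Fin n ⊕ Fin m) (Fin n) ℝ)
    (hH : H = S * (Matrix.fromCols A B)ᵀ)
    (G : Matrix (Fin n) (Fin n) ℝ) (P : Matrix (Fin n ⊕ Fin m) (Fin n ⊕ Fin m) ℝ)
    (X : Matrix (Fin n) (Fin m) ℝ)
    (hLMI : (-(Matrix.fromBlocks (-(S * P * S)) (Matrix.fromCols G X)ᵀ
        (Matrix.fromCols G X) (Hᵀ * P * H - G - Gᵀ))).PosDef) :
    (S * P * S).PosDef ∧ IsUnit G ∧
      specRad (A + B * (Xᵀ * (Gᵀ)⁻¹)) < 1 ∧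
      (S * P * S -
        (Matrix.fromBlocks A B ((Xᵀ * (Gᵀ)⁻¹) * A) ((Xᵀ * (Gᵀ)⁻¹) * B)) * (S * P * S) *
          (Matrix.fromBlocks A B ((Xᵀ * (Gᵀ)⁻¹) * A) ((Xᵀ * (Gᵀ)⁻¹) * B))ᵀ).PosDef := by
  set F := Xᵀ * (Gᵀ)⁻¹
  set Q := S * P * S
  have hW : Hᵀ * P * H = fromCols A B * Q * (fromCols A B)ᵀ := by
    rw [hH, transpose_mul, transpose_transpose, (isHermitian_iff_isSymm.mp hS.1).eq]
    simp only [Q, Matrix.mul_assoc]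
  have hM : (fromBlocks Q (-(fromCols G X)ᵀ) (-(fromCols G X))
      (G + Gᵀ - fromCols A B * Q * (fromCols A B)ᵀ)).PosDef := by
    convert hLMI using 1
    rw [fromBlocks_neg, neg_neg, hW]
    congr 1
    abel
  have hQ : Q.PosDef := by simpa using hM.toBlocks₁₁
  have hG : IsUnit G := isUnit_of_posDef_add_transpose <| by
    simpa [conjTranspose_eq_transpose_of_trivial] using hM.toBlocks₂₂.add_posSemidef
      (hQ.posSemidef.mul_mul_conjTranspose_same (fromCols A B))
  obtain ⟨E, hE⟩ : ∃ E, E = fromRows (1 : Matrix (Fin n) (Fin n) ℝ) F := ⟨_, rfl⟩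
  have hLyap : (Q - E * fromCols A B * Q * (E * fromCols A B)ᵀ).PosDef := by
    have h := posDef_sub_of_posDef_fromBlocks (by
      rwa [fromCols_eq_mul_transpose_fromRows hG, ← hE, transpose_mul, transpose_transpose] at hM)
    simpa only [transpose_mul, Matrix.mul_assoc] using h
  have hAF : E * fromCols A B = fromBlocks A B (F * A) (F * B) := by
    rw [hE, fromRows_mul_fromCols, Matrix.one_mul, Matrix.one_mul]
  have hABF : A + B * F = fromCols A B * E := by
    rw [hE, fromCols_mul_fromRows, Matrix.mul_one]
  refine ⟨hQ, hG, ?_, hAF ▸ hLyap⟩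
  rw [hABF]
  exact specRad_mul_lt_one_of_posDef_sub hQ hLyap

/-- If the data-driven stabilization LMI holds, then `S·P·S ≻ 0`, `G` is invertible, and
`F = Xᵀ·(Gᵀ)⁻¹` is a stabilizing gain with Lyapunov certificate
`A_F·(S·P·S)·A_Fᵀ ≺ S·P·S`. -/
theorem stabilization_LMI_gain {n m : ℕ}
    (A : Matrix (Fin n) (Fin n) ℝ) (B : Matrix (Fin n) (Fin m) ℝ)
    (S : Matrix (Fin n ⊕ Fin m) (Fin n ⊕ Fin m) ℝ) (hS : S.PosDef)
    (H : Matrix (Fin n ⊕ Fin m) (Fin n) ℝ)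
    (hH : H = S * (Matrix.fromCols A B)ᵀ)
    (G : Matrix (Fin n) (Fin n) ℝ) (P : Matrix (Fin n ⊕ Fin m) (Fin n ⊕ Fin m) ℝ)
    (X : Matrix (Fin n) (Fin m) ℝ) (hP : P.IsSymm)
    (hLMI : (-(Matrix.fromBlocks (-(S * P * S)) (Matrix.fromCols G X)ᵀ
        (Matrix.fromCols G X) (Hᵀ * P * H - G - Gᵀ))).PosDef) :
    (S * P * S).PosDef ∧ IsUnit G ∧
      specRad (A + B * (Xᵀ * (Gᵀ)⁻¹)) < 1 ∧
      (S * P * S -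
        (Matrix.fromBlocks A B ((Xᵀ * (Gᵀ)⁻¹) * A) ((Xᵀ * (Gᵀ)⁻¹) * B)) * (S * P * S) *
          (Matrix.fromBlocks A B ((Xᵀ * (Gᵀ)⁻¹) * A) ((Xᵀ * (Gᵀ)⁻¹) * B))ᵀ).PosDef :=
  stabilization_LMI_gain_general A B S hS H hH G P X hLMI
end

section
/- Let A ∈ ℝ^{n×n} and B ∈ ℝ^{n×m} be such that the controllability matrix [B, A·B, …, A^{n−1}·B] ∈ ℝ^{n×nm} has rank n, and let U ∈ ℝ^{m×m} be symmetric positive definite. Then the matrix Σ_{j=0}^{n−1} A^j·B·U·Bᵀ·(Aᵀ)^j ∈ ℝ^{n×n} is positive definite. -/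
/-! The sum factors as `C * (1 ⊗ₖ U) * Cᵀ`, where `C` is the controllability matrix. The middle
factor is positive definite, and `rank C = n` makes `x ↦ x ᵥ* C` injective, so the congruence
is positive definite as well. -/

open Matrix
open scoped Kronecker ComplexOrder

namespace Matrix

variable {ι l m R : Type*} [Fintype ι] [Fintype m]

theorem vecMul_injective_of_rank_eq_card {K : Type*} [Field K] [Fintype l] {M : Matrix m l K}
    (h : M.rank = Fintype.card m) : Function.Injective M.vecMul := by
  rw [vecMul_injective_iff, linearIndependent_iff_card_eq_finrank_span, Set.finrank,
    ← rank_eq_finrank_span_row, h]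

section CommSemiring

variable [CommSemiring R]

theorem of_mul_one_kronecker [DecidableEq ι] (M : ι → Matrix l m R) (U : Matrix m m R) :
    (of fun i (p : ι × m) => M p.1 i p.2) * ((1 : Matrix ι ι R) ⊗ₖ U) =
      of fun i (p : ι × m) => (M p.1 * U) i p.2 := by
  ext i ⟨j, b⟩
  simp [mul_apply, Fintype.sum_prod_type, one_apply]

variable [StarRing R]

theorem of_mul_conjTranspose_of (M N : ι → Matrix l m R) :
    (of fun i (p : ι × m) => M p.1 i p.2) * (of fun i (p : ι × m) => N p.1 i p.2)ᴴ =
      ∑ j, M j * (N j)ᴴ := by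
  ext i k
  simp [mul_apply, Matrix.sum_apply, Fintype.sum_prod_type]

theorem sum_mul_mul_conjTranspose_eq [DecidableEq ι] (M : ι → Matrix l m R) (U : Matrix m m R) :
    ∑ j, M j * U * (M j)ᴴ =
      (of fun i (p : ι × m) => M p.1 i p.2) * ((1 : Matrix ι ι R) ⊗ₖ U) *
        (of fun i (p : ι × m) => M p.1 i p.2)ᴴ := by
  rw [of_mul_one_kronecker]
  exact (of_mul_conjTranspose_of (fun j => M j * U) M).symm

end CommSemiring

theorem PosDef.sum_mul_mul_conjTranspose {𝕜 : Type*} [RCLike 𝕜] [Fintype l] {U : Matrix m m 𝕜}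
    (hU : U.PosDef) {M : ι → Matrix l m 𝕜}
    (hM : (of fun i (p : ι × m) => M p.1 i p.2).rank = Fintype.card l) :
    (∑ j, M j * U * (M j)ᴴ).PosDef := by
  classical
  rw [sum_mul_mul_conjTranspose_eq]
  exact (PosDef.one.kronecker hU).mul_mul_conjTranspose_same (vecMul_injective_of_rank_eq_card hM)

end Matrix

/-- If `(A, B)` is controllable (the controllability matrix has rank `n`) and `U ≻ 0`,
then `Σ_{j=0}^{n−1} A^j·B·U·Bᵀ·(Aᵀ)^j` is positive definite. -/
theorem controllability_gramian_posDef {n m : ℕ}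
    (A : Matrix (Fin n) (Fin n) ℝ) (B : Matrix (Fin n) (Fin m) ℝ)
    (hctrb : (Matrix.of fun (i : Fin n) (p : Fin n × Fin m) =>
        (A ^ (p.1 : ℕ) * B) i p.2).rank = n)
    (U : Matrix (Fin m) (Fin m) ℝ) (hU : U.PosDef) :
    (∑ j ∈ Finset.range n, A ^ j * B * U * Bᵀ * (Aᵀ) ^ j).PosDef := by
  have hterm (j : ℕ) : A ^ j * B * U * Bᵀ * (Aᵀ) ^ j = A ^ j * B * U * (A ^ j * B)ᴴ := by
    simp only [conjTranspose_eq_transpose_of_trivial, transpose_mul, transpose_pow,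
      Matrix.mul_assoc]
  simp only [hterm, ← Fin.sum_univ_eq_sum_range fun j => A ^ j * B * U * (A ^ j * B)ᴴ]
  exact hU.sum_mul_mul_conjTranspose (by simpa using hctrb)
end

section
/- Let w, y ∈ ℝ^n, u ∈ ℝ^m, and ε > 0, and set x := w + y. Then, in the Loewner order on ℝ^{(n+m)×(n+m)}, [[x·xᵀ, x·uᵀ], [u·xᵀ, u·uᵀ]] ⪰ [[w·wᵀ − (2/ε)·‖w‖²·I + (1−ε)·y·yᵀ, y·uᵀ], [u·yᵀ, (1−ε)·u·uᵀ]], where ‖w‖ denotes the Euclidean norm of w and I is the n×n identity matrix. -/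
open Matrix

/-!
The difference of the two block matrices equals
`ε⁻¹ • a·aᵀ + ε⁻¹ • b·bᵀ + (2/ε) • [[‖w‖²·I − w·wᵀ, 0], [0, 0]]` with `a = (w + ε·y, 0)` and
`b = (w, ε·u)`: two rank-one Gram matrices and a block that is positive semidefinite by
Cauchy–Schwarz.
-/

namespace Matrix

theorem vecMulVec_sumElim {l m n o α : Type*} [Mul α] (a : l → α) (b : m → α) (c : n → α)
    (d : o → α) :
    vecMulVec (Sum.elim a b) (Sum.elim c d) =
      fromBlocks (vecMulVec a c) (vecMulVec a d) (vecMulVec b c) (vecMulVec b d) := by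
  ext (i | i) (j | j) <;> rfl

theorem posSemidef_vecMulVec_self {n R : Type*} [Fintype n] [CommRing R] [PartialOrder R]
    [StarRing R] [TrivialStar R] [StarOrderedRing R] (a : n → R) :
    (vecMulVec a a).PosSemidef := by
  simpa using posSemidef_vecMulVec_self_star a

theorem PosSemidef.fromBlocks_zero₁₂_zero₂₁ {l m R : Type*} [Fintype l] [Fintype m] [CommRing R]
    [PartialOrder R] [StarRing R] [StarOrderedRing R] {A : Matrix l l R} {D : Matrix m m R}
    (hA : A.PosSemidef) (hD : D.PosSemidef) :
    (fromBlocks A 0 0 D).PosSemidef := by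
  refine .of_dotProduct_mulVec_nonneg (hA.isHermitian.fromBlocks (by simp) hD.isHermitian)
    fun x => ?_
  rw [← Sum.elim_comp_inl_inr x, fromBlocks_mulVec, Function.star_sumElim,
    sumElim_dotProduct_sumElim]
  simpa using add_nonneg (hA.dotProduct_mulVec_nonneg (x ∘ Sum.inl))
    (hD.dotProduct_mulVec_nonneg (x ∘ Sum.inr))

theorem posSemidef_sum_sq_smul_one_sub_vecMulVec {ι : Type*} [Fintype ι] [DecidableEq ι]
    (w : ι → ℝ) :
    ((∑ i, w i ^ 2) • (1 : Matrix ι ι ℝ) - vecMulVec w w).PosSemidef := by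
  refine .of_dotProduct_mulVec_nonneg (by simp [IsHermitian]) fun x => ?_
  have cauchy_schwarz : (w ⬝ᵥ x) ^ 2 ≤ (∑ i, w i ^ 2) * (x ⬝ᵥ x) := by
    simpa only [dotProduct, sq] using Finset.sum_mul_sq_le_sq_mul_sq Finset.univ w x
  simp only [star_trivial, sub_mulVec, smul_mulVec, one_mulVec, vecMulVec_mulVec,
    dotProduct_sub, dotProduct_smul, smul_eq_mul, op_smul_eq_mul, dotProduct_comm x w]
  linarith

end Matrix

/-- A Loewner lower bound on the outer-product block matrix of `(x, u)` with `x = w + y`: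
`[[x·xᵀ, x·uᵀ], [u·xᵀ, u·uᵀ]] ⪰
 [[w·wᵀ − (2/ε)·‖w‖²·I + (1−ε)·y·yᵀ, y·uᵀ], [u·yᵀ, (1−ε)·u·uᵀ]]`,
where `‖w‖² = Σ i, (w i)²` is the squared Euclidean norm. -/
theorem outer_product_block_lower_bound {n m : ℕ}
    (w y : Fin n → ℝ) (u : Fin m → ℝ) (ε : ℝ) (hε : 0 < ε) :
    (Matrix.fromBlocks
        (Matrix.vecMulVec (w + y) (w + y)) (Matrix.vecMulVec (w + y) u)
        (Matrix.vecMulVec u (w + y)) (Matrix.vecMulVec u u) -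
      Matrix.fromBlocks
        (Matrix.vecMulVec w w - ((2 / ε) * ∑ i, w i ^ 2) • (1 : Matrix (Fin n) (Fin n) ℝ) +
          (1 - ε) • Matrix.vecMulVec y y) (Matrix.vecMulVec y u)
        (Matrix.vecMulVec u y) ((1 - ε) • Matrix.vecMulVec u u)).PosSemidef := by
  have hε_inv : 0 ≤ ε⁻¹ := by positivity
  have sum_psd :
      (ε⁻¹ • vecMulVec (Sum.elim (w + ε • y) 0) (Sum.elim (w + ε • y) 0) +
        ε⁻¹ • vecMulVec (Sum.elim w (ε • u)) (Sum.elim w (ε • u)) +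
        (2 / ε) • fromBlocks ((∑ i, w i ^ 2) • 1 - vecMulVec w w) 0 0 (0 : Matrix (Fin m) _ ℝ)
        ).PosSemidef :=
    (((posSemidef_vecMulVec_self _).smul hε_inv).add
      ((posSemidef_vecMulVec_self _).smul hε_inv)).add
      (((posSemidef_sum_sq_smul_one_sub_vecMulVec w).fromBlocks_zero₁₂_zero₂₁ .zero).smul
        (by positivity))
  convert sum_psd using 1
  rw [sub_eq_iff_eq_add]
  simp only [vecMulVec_sumElim, fromBlocks_smul, fromBlocks_add, fromBlocks_inj]
  refine ⟨?_, ?_, ?_, ?_⟩ <;> ext i j <;>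
    simp only [vecMulVec_apply, vecMulVec_zero, zero_vecMulVec, vecMulVec_smul, smul_vecMulVec,
      Matrix.add_apply, Matrix.sub_apply, Matrix.smul_apply, one_apply, Pi.add_apply,
      Pi.smul_apply, Pi.zero_apply, smul_eq_mul, smul_zero, mul_ite, mul_one, mul_zero, zero_add,
      add_zero] <;>
    (try split_ifs) <;> field_simp <;> ring
end
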